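/- Under the BPR assumption, let x̃ be a baseline equilibrium (α = 0) and let (x^H, x^A) be an equilibrium with autonomous fraction α ∈ (0,1]. If x^H ≤ x̃ componentwise (x_p^H ≤ x̃_p for every path p), then S(Δ(x^H + x^A)) ≤ S(Δx̃); moreover, the inequality is strict if in addition Δ(x^H + x^A) ≠ Δx̃. -/

import Mathlib

open scoped BigOperators

/-- Aggregated link flow `f = Δ x`. -/
noncomputable def aggFlow {L P : Type*} [Fintype P] (Δ : L → P → ℝ) (x : P → ℝ) : L → ℝ :=
  fun a => ∑ p, Δ a p * x p

/-- Human path cost `C_p^H(f) = Σ_a Δ_{ap} t_a(f_a)`. -/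
noncomputable def CH {L P : Type*} [Fintype L] (Δ : L → P → ℝ) (t : L → ℝ → ℝ)
    (f : L → ℝ) (p : P) : ℝ :=
  ∑ a, Δ a p * t a (f a)

/-- Autonomous (marginal social) path cost
`C_p^A(f) = Σ_a Δ_{ap} (t_a(f_a) + f_a t_a'(f_a))`. -/
noncomputable def CA {L P : Type*} [Fintype L] (Δ : L → P → ℝ) (t : L → ℝ → ℝ)
    (f : L → ℝ) (p : P) : ℝ :=
  ∑ a, Δ a p * (t a (f a) + f a * deriv (t a) (f a))

/-- Social cost `S(f) = Σ_a f_a t_a(f_a)`. -/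
noncomputable def Scost {L : Type*} [Fintype L] (t : L → ℝ → ℝ) (f : L → ℝ) : ℝ :=
  ∑ a, f a * t a (f a)

/-- Equilibrium with autonomous fraction `α`: a feasible path flow pattern
together with multipliers `λ^H, λ^A` satisfying the Wardrop-like conditions. -/
noncomputable def IsEquilibrium {L P : Type*} [Fintype L] [Fintype P]
    (Δ : L → P → ℝ) (t : L → ℝ → ℝ) (α : ℝ) (xH xA : P → ℝ) : Prop :=
  (∀ p, 0 ≤ xH p) ∧ (∀ p, 0 ≤ xA p) ∧ (∑ p, xH p = 1 - α) ∧ (∑ p, xA p = α) ∧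
  ∃ lamH lamA : ℝ, ∀ p : P,
    (lamH ≤ CH Δ t (aggFlow Δ (fun r => xH r + xA r)) p ∧
      (0 < xH p → CH Δ t (aggFlow Δ (fun r => xH r + xA r)) p = lamH)) ∧
    (lamA ≤ CA Δ t (aggFlow Δ (fun r => xH r + xA r)) p ∧
      (0 < xA p → CA Δ t (aggFlow Δ (fun r => xH r + xA r)) p = lamA))

/-- Baseline equilibrium (`α = 0`): a single nonnegative unit-demand path flow
vector satisfying the human Wardrop condition. -/
noncomputable def IsBaselineEquilibrium {L P : Type*} [Fintype L] [Fintype P]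
    (Δ : L → P → ℝ) (t : L → ℝ → ℝ) (xt : P → ℝ) : Prop :=
  (∀ p, 0 ≤ xt p) ∧ (∑ p, xt p = 1) ∧
  ∃ lam : ℝ, ∀ p : P,
    lam ≤ CH Δ t (aggFlow Δ xt) p ∧ (0 < xt p → CH Δ t (aggFlow Δ xt) p = lam)

/-- BPR assumption: `t_a(z) = k_a z^n + b_a` for `z ≥ 0`, with `k_a > 0`,
`b_a ≥ 0`, and exponent `n ≥ 1`. -/
def IsBPR {L : Type*} (t : L → ℝ → ℝ) (n : ℝ) (k b : L → ℝ) : Prop :=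
  1 ≤ n ∧ (∀ a, 0 < k a) ∧ (∀ a, 0 ≤ b a) ∧
  ∀ a, ∀ z : ℝ, 0 ≤ z → t a z = k a * z ^ n + b a

/-!
Under the BPR assumption the social cost `S` is strictly convex in the link flows, and its
gradient at `f` is the vector of marginal link costs `t_a(f_a) + f_a t_a'(f_a)`, whose path sums
are the autonomous costs `C^A`. Hence `S(f̃) ≥ S(f) + ⟨∇S(f), f̃ - f⟩`, and pulling the pairing
back to paths gives `Σ_p C^A_p(f) (x̃_p - x^H_p - x^A_p)`. This is nonnegative: `x̃ - x^H` is a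
nonnegative path flow of the same demand `α` as `x^A`, while `x^A` only uses paths of minimal
autonomous cost.
-/

namespace Real

lemma add_one_mul_rpow_mul_lt {n z w : ℝ} (hn : 0 < n) (hz : 0 ≤ z) (hw : 0 ≤ w) (hzw : z ≠ w) :
    (n + 1) * (z ^ n * w) < n * z ^ (n + 1) + w ^ (n + 1) := by
  -- Young's inequality for `z ^ n` and `w` with the exponents `(n + 1) / n` and `n + 1`.
  have hpq : ((n + 1) / n).HolderConjugate (n + 1) := by
    simpa [conjExponent] using (HolderConjugate.conjExponent (p := n + 1) (by linarith)).symm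
  have hyoung := young_inequality_of_nonneg (rpow_nonneg hz n) hw hpq
  have hne := (young_inequality_eq_iff_of_nonneg (rpow_nonneg hz n) hw hpq).not
  rw [← rpow_mul hz, mul_div_cancel₀ _ hn.ne', rpow_left_inj hz hw (by linarith)] at hne
  rw [← rpow_mul hz, mul_div_cancel₀ _ hn.ne'] at hyoung
  calc (n + 1) * (z ^ n * w)
      < (n + 1) * (z ^ (n + 1) / ((n + 1) / n) + w ^ (n + 1) / (n + 1)) := by
        gcongr; exact lt_of_le_of_ne hyoung (hne.mpr hzw)
    _ = n * z ^ (n + 1) + w ^ (n + 1) := by field_simp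

lemma add_one_mul_rpow_mul_le {n z w : ℝ} (hn : 0 < n) (hz : 0 ≤ z) (hw : 0 ≤ w) :
    (n + 1) * (z ^ n * w) ≤ n * z ^ (n + 1) + w ^ (n + 1) := by
  rcases eq_or_ne z w with rfl | hzw
  · rw [rpow_add_one' hz (by linarith)]
    exact le_of_eq (by ring)
  · exact (add_one_mul_rpow_mul_lt hn hz hw hzw).le

end Real

section Network

variable {L P : Type*}

noncomputable def marginalCost (t : L → ℝ → ℝ) (f : L → ℝ) (a : L) : ℝ :=
  t a (f a) + f a * deriv (t a) (f a)

lemma CA_eq_sum_marginalCost [Fintype L] (Δ : L → P → ℝ) (t : L → ℝ → ℝ) (f : L → ℝ) (p : P) :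
    CA Δ t f p = ∑ a, Δ a p * marginalCost t f a :=
  rfl

lemma aggFlow_nonneg [Fintype P] {Δ : L → P → ℝ} {x : P → ℝ} (hΔ : ∀ a p, 0 ≤ Δ a p)
    (hx : ∀ p, 0 ≤ x p) (a : L) : 0 ≤ aggFlow Δ x a :=
  Finset.sum_nonneg fun p _ => mul_nonneg (hΔ a p) (hx p)

lemma sum_mul_aggFlow [Fintype L] [Fintype P] (Δ : L → P → ℝ) (c : L → ℝ) (x : P → ℝ) :
    ∑ a, c a * aggFlow Δ x a = ∑ p, (∑ a, Δ a p * c a) * x p := by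
  simp only [aggFlow, Finset.mul_sum, Finset.sum_mul]
  rw [Finset.sum_comm]
  exact Finset.sum_congr rfl fun p _ => Finset.sum_congr rfl fun a _ => by ring

lemma sum_mul_le_sum_mul_of_wardrop [Fintype P] {C x y : P → ℝ} {lam : ℝ} (hC : ∀ p, lam ≤ C p)
    (hCx : ∀ p, 0 < x p → C p = lam) (hx : ∀ p, 0 ≤ x p) (hy : ∀ p, 0 ≤ y p)
    (hxy : ∑ p, x p = ∑ p, y p) :
    ∑ p, C p * x p ≤ ∑ p, C p * y p :=
  calc ∑ p, C p * x p = ∑ p, lam * x p := by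
        refine Finset.sum_congr rfl fun p _ => ?_
        rcases (hx p).eq_or_lt with h | h
        · simp [← h]
        · rw [hCx p h]
    _ = ∑ p, lam * y p := by rw [← Finset.mul_sum, ← Finset.mul_sum, hxy]
    _ ≤ ∑ p, C p * y p := Finset.sum_le_sum fun p _ => mul_le_mul_of_nonneg_right (hC p) (hy p)

end Network

namespace IsBPR

variable {L : Type*} {t : L → ℝ → ℝ} {n : ℝ} {k b : L → ℝ}

lemma pos_exponent (h : IsBPR t n k b) : 0 < n :=
  zero_lt_one.trans_le h.1

lemma add_mul_deriv_eq (h : IsBPR t n k b) (a : L) {z : ℝ} (hz : 0 ≤ z) :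
    t a z + z * deriv (t a) z = (n + 1) * k a * z ^ n + b a := by
  have ht := h.2.2.2 a
  rcases hz.eq_or_lt with rfl | hz
  · simp [ht 0 le_rfl, Real.zero_rpow h.pos_exponent.ne']
  · have hev : t a =ᶠ[nhds z] fun x => k a * x ^ n + b a :=
      Filter.eventually_of_mem (Ioi_mem_nhds hz) fun x hx => ht x (le_of_lt hx)
    rw [hev.deriv_eq, ht z hz.le,
      (((Real.hasDerivAt_rpow_const (Or.inl hz.ne')).const_mul (k a)).add_const (b a)).deriv,
      Real.rpow_sub_one hz.ne']
    field_simp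
    ring

lemma tangent_gap_eq (h : IsBPR t n k b) (a : L) {z w : ℝ} (hz : 0 ≤ z) (hw : 0 ≤ w) :
    w * t a w - (z * t a z + (t a z + z * deriv (t a) z) * (w - z)) =
      k a * (n * z ^ (n + 1) + w ^ (n + 1) - (n + 1) * (z ^ n * w)) := by
  have hn := h.pos_exponent
  rw [h.add_mul_deriv_eq a hz, h.2.2.2 a z hz, h.2.2.2 a w hw,
    Real.rpow_add_one' hz (by linarith), Real.rpow_add_one' hw (by linarith)]
  ring

lemma tangent_le (h : IsBPR t n k b) (a : L) {z w : ℝ} (hz : 0 ≤ z) (hw : 0 ≤ w) :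
    z * t a z + (t a z + z * deriv (t a) z) * (w - z) ≤ w * t a w := by
  have := mul_nonneg (h.2.1 a).le
    (sub_nonneg.mpr (Real.add_one_mul_rpow_mul_le h.pos_exponent hz hw))
  linarith [h.tangent_gap_eq a hz hw]

lemma tangent_lt (h : IsBPR t n k b) (a : L) {z w : ℝ} (hz : 0 ≤ z) (hw : 0 ≤ w) (hzw : z ≠ w) :
    z * t a z + (t a z + z * deriv (t a) z) * (w - z) < w * t a w := by
  have := mul_pos (h.2.1 a)
    (sub_pos.mpr (Real.add_one_mul_rpow_mul_lt h.pos_exponent hz hw hzw))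
  linarith [h.tangent_gap_eq a hz hw]

variable [Fintype L]

lemma Scost_add_sum_marginalCost_le (h : IsBPR t n k b) {f g : L → ℝ} (hf : ∀ a, 0 ≤ f a)
    (hg : ∀ a, 0 ≤ g a) :
    Scost t f + ∑ a, marginalCost t f a * (g a - f a) ≤ Scost t g := by
  rw [Scost, Scost, ← Finset.sum_add_distrib]
  exact Finset.sum_le_sum fun a _ => h.tangent_le a (hf a) (hg a)

lemma Scost_add_sum_marginalCost_lt (h : IsBPR t n k b) {f g : L → ℝ} (hf : ∀ a, 0 ≤ f a)
    (hg : ∀ a, 0 ≤ g a) (hfg : f ≠ g) :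
    Scost t f + ∑ a, marginalCost t f a * (g a - f a) < Scost t g := by
  obtain ⟨a, ha⟩ := Function.ne_iff.mp hfg
  rw [Scost, Scost, ← Finset.sum_add_distrib]
  exact Finset.sum_lt_sum (fun a _ => h.tangent_le a (hf a) (hg a))
    ⟨a, Finset.mem_univ a, h.tangent_lt a (hf a) (hg a) ha⟩

end IsBPR

theorem improvement_condition_general {L P : Type*} [Fintype L] [Fintype P]
    (Δ : L → P → ℝ) (hΔ : ∀ a p, Δ a p = 0 ∨ Δ a p = 1)
    (t : L → ℝ → ℝ) (n : ℝ) (k b : L → ℝ) (hBPR : IsBPR t n k b)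
    (α : ℝ)
    (xt : P → ℝ) (hxt : IsBaselineEquilibrium Δ t xt)
    (xH xA : P → ℝ) (heq : IsEquilibrium Δ t α xH xA)
    (hle : ∀ p, xH p ≤ xt p) :
    Scost t (aggFlow Δ (fun r => xH r + xA r)) ≤ Scost t (aggFlow Δ xt) ∧
    (aggFlow Δ (fun r => xH r + xA r) ≠ aggFlow Δ xt →
      Scost t (aggFlow Δ (fun r => xH r + xA r)) < Scost t (aggFlow Δ xt)) := by
  obtain ⟨hxt0, hxt1, -⟩ := hxt
  obtain ⟨hH0, hA0, hH1, hA1, _, lamA, hwar⟩ := heq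
  have hΔ0 : ∀ a p, 0 ≤ Δ a p := fun a p => by rcases hΔ a p with h | h <;> simp [h]
  set f := aggFlow Δ (fun r => xH r + xA r)
  set ft := aggFlow Δ xt
  have hf0 := aggFlow_nonneg hΔ0 fun p => add_nonneg (hH0 p) (hA0 p)
  have hft0 := aggFlow_nonneg hΔ0 hxt0
  have hA_cheapest : ∑ p, CA Δ t f p * xA p ≤ ∑ p, CA Δ t f p * (xt p - xH p) :=
    sum_mul_le_sum_mul_of_wardrop (fun p => (hwar p).2.1) (fun p => (hwar p).2.2) hA0
      (fun p => sub_nonneg.mpr (hle p)) (by rw [Finset.sum_sub_distrib, hxt1, hH1, hA1]; ring)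
  have hpairing : 0 ≤ ∑ a, marginalCost t f a * (ft a - f a) := by
    simp only [mul_sub, mul_add, Finset.sum_sub_distrib, Finset.sum_add_distrib, f, ft,
      sum_mul_aggFlow, ← CA_eq_sum_marginalCost] at hA_cheapest ⊢
    linarith
  exact ⟨by linarith [hBPR.Scost_add_sum_marginalCost_le hf0 hft0],
    fun hne => by linarith [hBPR.Scost_add_sum_marginalCost_lt hf0 hft0 hne]⟩

/-- Lemma 3 (improvement condition): under the BPR assumption, if `x̃` is a
baseline equilibrium (`α = 0`), `(x^H, x^A)` is an equilibrium with autonomous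
fraction `α ∈ (0,1]`, and `x^H ≤ x̃` componentwise, then the mixed-autonomy social
cost does not exceed the baseline social cost; the inequality is strict whenever
the aggregated link flows differ. -/
theorem improvement_condition {L P : Type*} [Fintype L] [Fintype P] [Nonempty P]
    (Δ : L → P → ℝ) (hΔ : ∀ a p, Δ a p = 0 ∨ Δ a p = 1)
    (t : L → ℝ → ℝ) (n : ℝ) (k b : L → ℝ) (hBPR : IsBPR t n k b)
    (α : ℝ) (hα : α ∈ Set.Ioc (0:ℝ) 1)
    (xt : P → ℝ) (hxt : IsBaselineEquilibrium Δ t xt)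
    (xH xA : P → ℝ) (heq : IsEquilibrium Δ t α xH xA)
    (hle : ∀ p, xH p ≤ xt p) :
    Scost t (aggFlow Δ (fun r => xH r + xA r)) ≤ Scost t (aggFlow Δ xt) ∧
    (aggFlow Δ (fun r => xH r + xA r) ≠ aggFlow Δ xt →
      Scost t (aggFlow Δ (fun r => xH r + xA r)) < Scost t (aggFlow Δ xt)) :=
  improvement_condition_general Δ hΔ t n k b hBPR α xt hxt xH xA heq hle
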